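/- arXiv:1504.05618 — 2 statements merged into one kernel-verified Lean document; each statement's English description precedes it below -/
import Mathlib

section
/- Let (P, B) be a 2-(v,k,1) design over a finite field F with char(F) dividing (k-1), and let X_p, X_B ∈ F for each point p and block B. Then for any block B₀, the quantity Σ_{p ∈ B₀} (X_p + Σ_{B ∋ p} X_B) + Σ_{p ∉ B₀} X_p + Σ_{B ∉ ⟨B₀⟩} X_B equals the total sum Z = Σ_{p ∈ P} X_p + Σ_{B ∈ B} X_B. -/
/-- Correctness of the scalar linear network code when char(F) | (k-1):
for any block B₀ of a 2-(v,k,1) design,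
∑_{p ∈ B₀}(X_p + ∑_{B ∋ p} X_B) + ∑_{p ∉ B₀} X_p + ∑_{B ∉ ⟨B₀⟩} X_B
  = ∑_{p ∈ P} X_p + ∑_{B ∈ 𝓑} X_B. -/
theorem scalar_code_correct {α F : Type*} [Fintype α] [DecidableEq α] [Field F] [Fintype F]
    (k : ℕ) (hk2 : 2 ≤ k) (Bs : Finset (Finset α))
    (hk : ∀ B ∈ Bs, B.card = k)
    (hlam : ∀ p q : α, p ≠ q → (Bs.filter (fun B => p ∈ B ∧ q ∈ B)).card = 1)
    (hchar : ringChar F ∣ (k - 1))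
    (X : α → F) (Y : Finset α → F)
    (B₀ : Finset α) (hB₀ : B₀ ∈ Bs) :
    ∑ p ∈ B₀, (X p + ∑ B ∈ Bs.filter (fun B => p ∈ B), Y B)
      + ∑ p ∈ Finset.univ \ B₀, X p
      + ∑ B ∈ Bs.filter (fun B => ¬ (B₀ ∩ B).Nonempty), Y B
    = ∑ p : α, X p + ∑ B ∈ Bs, Y B := by
  have hcast : ∀ B ∈ Bs, ((B₀ ∩ B).card • Y B : F)
      = if (B₀ ∩ B).Nonempty then Y B else 0 := by
    intro B hB
    by_cases hne : (B₀ ∩ B).Nonempty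
    · rw [if_pos hne]
      have hcard : (B₀ ∩ B).card = k ∨ (B₀ ∩ B).card = 1 := by
        by_cases hBB : B = B₀
        · subst hBB; left; rw [Finset.inter_self]; exact hk B hB
        · right
          have hle : (B₀ ∩ B).card ≤ 1 := by
            by_contra h
            push_neg at h
            obtain ⟨p, hp, q, hq, hpq⟩ := Finset.one_lt_card.mp h
            have h2 : 1 < (Bs.filter (fun C => p ∈ C ∧ q ∈ C)).card :=
              Finset.one_lt_card.mpr ⟨B₀, by
                simp_all [Finset.mem_filter, Finset.mem_inter] , B, by
                simp_all [Finset.mem_filter, Finset.mem_inter], Ne.symm hBB⟩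
            rw [hlam p q hpq] at h2
            exact lt_irrefl 1 h2
          have hpos := Finset.card_pos.mpr hne
          omega
      have hk1 : ((k : F)) = 1 := by
        have : ((k - 1 : ℕ) : F) = 0 :=
          (CharP.cast_eq_zero_iff F (ringChar F) _).mpr hchar
        have hk' : k = (k - 1) + 1 := by omega
        rw [hk', Nat.cast_add, this, Nat.cast_one, zero_add]
      rcases hcard with h | h <;> rw [h]
      · rw [nsmul_eq_mul, hk1, one_mul]
      · rw [one_smul]
    · rw [if_neg hne]
      rw [Finset.not_nonempty_iff_eq_empty] at hne
      rw [hne, Finset.card_empty, zero_smul]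
  have hswap : ∑ p ∈ B₀, ∑ B ∈ Bs.filter (fun B => p ∈ B), Y B
      = ∑ B ∈ Bs, (B₀ ∩ B).card • Y B := by
    simp only [Finset.sum_filter]
    rw [Finset.sum_comm]
    refine Finset.sum_congr rfl fun B _ => ?_
    rw [← Finset.sum_filter, Finset.sum_const, Finset.filter_mem_eq_inter]
  have hY : ∑ B ∈ Bs, ((B₀ ∩ B).card • Y B : F)
      = ∑ B ∈ Bs.filter (fun B => (B₀ ∩ B).Nonempty), Y B := by
    rw [Finset.sum_congr rfl hcast, Finset.sum_ite, Finset.sum_const_zero, add_zero]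
  rw [Finset.sum_add_distrib, hswap, hY]
  have hX : ∑ p ∈ B₀, X p + ∑ p ∈ Finset.univ \ B₀, X p = ∑ p : α, X p := by
    rw [add_comm, Finset.sum_sdiff (Finset.subset_univ B₀)]
  have hYtot : ∑ B ∈ Bs.filter (fun B => (B₀ ∩ B).Nonempty), Y B
      + ∑ B ∈ Bs.filter (fun B => ¬ (B₀ ∩ B).Nonempty), Y B = ∑ B ∈ Bs, Y B :=
    Finset.sum_filter_add_sum_filter_not _ _ _
  linear_combination hX + hYtot
end

section
/- Let (P, B) be a 2-(v,k,1) design over a finite field F and let X_p, X_B ∈ F^m for each point p and block B. Then for any block B₀, Σ_{p ∈ B₀}(X_p + Σ_{B ∋ p} X_B) − (k−1)·X_{B₀} + Σ_{p ∉ B₀} X_p + Σ_{B ∉ ⟨B₀⟩} X_B = Σ_{p ∈ P} X_p + Σ_{B ∈ B} X_B. -/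
/-- Decoding identity for terminal t_{B₀} in the fractional linear network code
(Lemma 6 of the paper), over F^m:
∑_{p ∈ B₀}(X_p + ∑_{B ∋ p} X_B) − (k−1)·X_{B₀} + ∑_{p ∉ B₀} X_p + ∑_{B ∉ ⟨B₀⟩} X_B
  = ∑_{p ∈ P} X_p + ∑_{B ∈ 𝓑} X_B. -/
theorem fractional_code_decoding {α F : Type*} [Fintype α] [DecidableEq α]
    [Field F] [Fintype F] (m : ℕ)
    (k : ℕ) (hk2 : 2 ≤ k) (Bs : Finset (Finset α))
    (hk : ∀ B ∈ Bs, B.card = k)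
    (hlam : ∀ p q : α, p ≠ q → (Bs.filter (fun B => p ∈ B ∧ q ∈ B)).card = 1)
    (X : α → (Fin m → F)) (Y : Finset α → (Fin m → F))
    (B₀ : Finset α) (hB₀ : B₀ ∈ Bs) :
    ∑ p ∈ B₀, (X p + ∑ B ∈ Bs.filter (fun B => p ∈ B), Y B)
      - (k - 1) • Y B₀
      + ∑ p ∈ Finset.univ \ B₀, X p
      + ∑ B ∈ Bs.filter (fun B => ¬ (B₀ ∩ B).Nonempty), Y B
    = ∑ p : α, X p + ∑ B ∈ Bs, Y B := by
  classical
  have hcap : ∀ B ∈ Bs, B ≠ B₀ → (B₀ ∩ B).card ≤ 1 := by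
    intro B hB hne
    by_contra h
    push_neg at h
    obtain ⟨p, hp, q, hq, hpq⟩ := Finset.one_lt_card.mp h
    have hBmem : B ∈ Bs.filter (fun B => p ∈ B ∧ q ∈ B) := by
      simp only [Finset.mem_filter]
      exact ⟨hB, (Finset.mem_inter.mp hp).2, (Finset.mem_inter.mp hq).2⟩
    have hB₀mem : B₀ ∈ Bs.filter (fun B => p ∈ B ∧ q ∈ B) := by
      simp only [Finset.mem_filter]
      exact ⟨hB₀, (Finset.mem_inter.mp hp).1, (Finset.mem_inter.mp hq).1⟩
    have : 1 < (Bs.filter (fun B => p ∈ B ∧ q ∈ B)).card :=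
      Finset.one_lt_card.mpr ⟨B, hBmem, B₀, hB₀mem, hne⟩
    rw [hlam p q hpq] at this
    omega
  -- swap the double sum
  have hswap : ∑ p ∈ B₀, ∑ B ∈ Bs.filter (fun B => p ∈ B), Y B
      = ∑ B ∈ Bs, (B₀ ∩ B).card • Y B := by
    simp_rw [Finset.sum_filter]
    rw [Finset.sum_comm]
    refine Finset.sum_congr rfl fun B hB => ?_
    rw [← Finset.sum_filter, Finset.sum_const]
    have : B₀.filter (fun p => p ∈ B) = B₀ ∩ B := by
      ext p; simp
    rw [this]
  set M := Bs.filter (fun B => (B₀ ∩ B).Nonempty) with hM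
  have hB₀ne : B₀.Nonempty := Finset.card_pos.mp (by rw [hk B₀ hB₀]; omega)
  have hB₀M : B₀ ∈ M := by
    rw [hM, Finset.mem_filter]
    exact ⟨hB₀, by rwa [Finset.inter_self]⟩
  have hsplit : ∑ B ∈ Bs, (B₀ ∩ B).card • Y B
      = k • Y B₀ + ∑ B ∈ M.erase B₀, Y B := by
    rw [← Finset.sum_filter_add_sum_filter_not Bs (fun B => (B₀ ∩ B).Nonempty)
      (fun B => (B₀ ∩ B).card • Y B)]
    have h2 : ∑ B ∈ Bs.filter (fun B => ¬ (B₀ ∩ B).Nonempty),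
        (B₀ ∩ B).card • Y B = 0 := by
      refine Finset.sum_eq_zero fun B hB => ?_
      have : (B₀ ∩ B).card = 0 := by
        simp only [Finset.mem_filter, Finset.not_nonempty_iff_eq_empty] at hB
        simp [hB.2]
      simp [this]
    rw [h2, add_zero, ← hM, ← Finset.add_sum_erase M _ hB₀M]
    congr 1
    · rw [Finset.inter_self, hk B₀ hB₀]
    · refine Finset.sum_congr rfl fun B hB => ?_
      have hBne : B ≠ B₀ := Finset.ne_of_mem_erase hB
      have hBM : B ∈ M := Finset.mem_of_mem_erase hB
      rw [hM, Finset.mem_filter] at hBM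
      have h1 : (B₀ ∩ B).card = 1 :=
        le_antisymm (hcap B hBM.1 hBne) (Finset.card_pos.mpr hBM.2)
      rw [h1, one_smul]
  have hX : ∑ p ∈ B₀, X p + ∑ p ∈ Finset.univ \ B₀, X p = ∑ p : α, X p := by
    rw [add_comm, Finset.sum_sdiff (Finset.subset_univ B₀)]
  have hY : ∑ B ∈ Bs, Y B = (Y B₀ + ∑ B ∈ M.erase B₀, Y B)
      + ∑ B ∈ Bs.filter (fun B => ¬ (B₀ ∩ B).Nonempty), Y B := by
    rw [← Finset.sum_filter_add_sum_filter_not Bs (fun B => (B₀ ∩ B).Nonempty) Y,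
      ← hM, ← Finset.add_sum_erase M Y hB₀M]
  have hkk : k • Y B₀ = Y B₀ + (k - 1) • Y B₀ := by
    conv_lhs => rw [show k = (k - 1) + 1 by omega]
    rw [succ_nsmul, add_comm]
  rw [Finset.sum_add_distrib, hswap, hsplit, hY, ← hX, hkk]
  abel
end
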